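/- Let λ be a partition of n = p + q, X ∈ {BDI, CI, CII, DIII}, and assume #syd_X(λ;p,q) ≥ 2. If X = BDI or X = CII, then the graph Γ_X(λ;p,q) has no edges if and only if for every column length h of λ (i.e., every h with λ_h − λ_{h+1} > 0), either λ_h − λ_{h+1} is odd, or λ_h − λ_{h+1} is even and λ_h is even. If X = CI or X = DIII, then Γ_X(λ;p,q) has no edges if and only if for every column length h of λ, either λ_h − λ_{h+1} is odd, or λ_h − λ_{h+1} is even and λ_h is odd. In particular, if λ has distinct column lengths, Γ_X(λ;p,q) has no edges. -/

import Mathlib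

open Finset

/-- A partition of `n`, given by the function `l` listing its parts in weakly
decreasing order: `l j = λ_j` is the `j`-th part for `1 ≤ j ≤ len`, and
`l j = 0` for `j > len`. -/
structure PartitionData : Type where
  l : ℕ → ℕ
  len : ℕ
  anti : ∀ j, 1 ≤ j → l (j + 1) ≤ l j
  pos : ∀ j, 1 ≤ j → (0 < l j ↔ j ≤ len)

namespace PartitionData

/-- The multiplicity `m(i)` of `i` as a part of the partition. -/
def mult (P : PartitionData) (i : ℕ) : ℕ :=
  ((Finset.Icc 1 P.len).filter (fun j => P.l j = i)).card

/-- The finite set of (distinct) parts of the partition. -/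
def partsSet (P : PartitionData) : Finset ℕ :=
  (Finset.Icc 1 P.len).image P.l

/-- The sum of the parts (i.e. the number `n` the partition partitions). -/
def boxSum (P : PartitionData) : ℕ := ∑ j ∈ Finset.Icc 1 P.len, P.l j

/-- The number of odd parts of the partition. -/
def oddCount (P : PartitionData) : ℕ :=
  ((Finset.Icc 1 P.len).filter (fun j => Odd (P.l j))).card

end PartitionData

/-- A signed Young diagram of shape `P` and signature `(p, q)`, encoded by the
function `f` sending each part length `i` to `m_T⁺(i)`, the number of rows of
length `i` whose leading sign is `+`.  A row of length `i` with leading sign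
`+` has `(i+1)/2` plus-boxes and `i/2` minus-boxes, and vice versa. -/
structure SYD (P : PartitionData) (p q : ℕ) : Type where
  f : ℕ → ℕ
  le_mult : ∀ i, f i ≤ P.mult i
  plus_eq : ∑ i ∈ P.partsSet, (f i * ((i + 1) / 2) + (P.mult i - f i) * (i / 2)) = p
  minus_eq : ∑ i ∈ P.partsSet, (f i * (i / 2) + (P.mult i - f i) * ((i + 1) / 2)) = q

/-- `i` and `j` are consecutive distinct parts: `i > j` with no part strictly
in between (so if the distinct parts are `i_1 > ⋯ > i_k`, the pairs are
`(i_r, i_{r+1})`). -/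
def Consec (P : PartitionData) (i j : ℕ) : Prop :=
  i ∈ P.partsSet ∧ j ∈ P.partsSet ∧ j < i ∧ ∀ x ∈ P.partsSet, ¬ (j < x ∧ x < i)

/-- `j` is the smallest part `i_k`. -/
def IsMinPart (P : PartitionData) (j : ℕ) : Prop :=
  j ∈ P.partsSet ∧ ∀ x ∈ P.partsSet, j ≤ x

/-- Adjacency of signed Young diagrams with step `c`:
`π(T) - π(T') ∈ {±c(e_r - e_{r+1})} ∪ {±c e_k}` in the coordinates indexed by
the distinct parts `i_1 > ⋯ > i_k`. -/
def AdjRel (P : PartitionData) {p q : ℕ} (c : ℕ) (T T' : SYD P p q) : Prop :=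
  (∃ i j, Consec P i j ∧ (∀ x, x ≠ i → x ≠ j → T.f x = T'.f x) ∧
    ((T.f i = T'.f i + c ∧ T'.f j = T.f j + c) ∨
      (T'.f i = T.f i + c ∧ T.f j = T'.f j + c)))
  ∨ (∃ j, IsMinPart P j ∧ (∀ x, x ≠ j → T.f x = T'.f x) ∧
      (T.f j = T'.f j + c ∨ T'.f j = T.f j + c))

/-- The orbit graph `Γ(λ;p,q)` (type AIII). -/
def orbitGraph (P : PartitionData) (p q : ℕ) : SimpleGraph (SYD P p q) :=
  SimpleGraph.fromRel (AdjRel P 1)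

/-- Type BDI: `m_T⁺(i) = m(i)/2` for every even part length `i`. -/
def SYD.IsBDI {P : PartitionData} {p q : ℕ} (T : SYD P p q) : Prop :=
  ∀ i, Even i → 2 * T.f i = P.mult i

/-- Type CI: `p = q` and `m_T⁺(i) = m(i)/2` for every odd part length `i`. -/
def SYD.IsCI {P : PartitionData} {p q : ℕ} (T : SYD P p q) : Prop :=
  p = q ∧ ∀ i, Odd i → 2 * T.f i = P.mult i

/-- Type CII: `p`, `q` even, `m_T⁺(i) = m(i)/2` for every even part length `i`,
and `m(i)`, `m_T⁺(i)` even for every odd part length `i`. -/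
def SYD.IsCII {P : PartitionData} {p q : ℕ} (T : SYD P p q) : Prop :=
  Even p ∧ Even q ∧ (∀ i, Even i → 2 * T.f i = P.mult i) ∧
    ∀ i, Odd i → Even (P.mult i) ∧ Even (T.f i)

/-- Type DIII: `p = q`, `m_T⁺(i) = m(i)/2` for every odd part length `i`, and
`m(i)`, `m_T⁺(i)` even for every even part length `i`. -/
def SYD.IsDIII {P : PartitionData} {p q : ℕ} (T : SYD P p q) : Prop :=
  p = q ∧ (∀ i, Odd i → 2 * T.f i = P.mult i) ∧
    ∀ i, Even i → Even (P.mult i) ∧ Even (T.f i)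

/-- The orbit graph `Γ_X(λ;p,q)` on the vertices `syd_X(λ;p,q)` (given by the
predicate `Pr`), with step `c` (`c = 1` for X = BDI, CI and `c = 2` for
X = CII, DIII). -/
def orbitGraphX (P : PartitionData) (p q c : ℕ) (Pr : SYD P p q → Prop) :
    SimpleGraph {T : SYD P p q // Pr T} :=
  SimpleGraph.fromRel (fun T T' => AdjRel P c T.1 T'.1)

/-- For every column length `h` of `λ`: the multiplicity `λ_h - λ_{h+1}` is
odd, or it is even and `λ_h` is even. -/
def NoEdgeCondBDI (P : PartitionData) : Prop :=
  ∀ h, 1 ≤ h → P.l (h + 1) < P.l h →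
    (Odd (P.l h - P.l (h + 1)) ∨ (Even (P.l h - P.l (h + 1)) ∧ Even (P.l h)))

/-- For every column length `h` of `λ`: the multiplicity `λ_h - λ_{h+1}` is
odd, or it is even and `λ_h` is odd. -/
def NoEdgeCondCI (P : PartitionData) : Prop :=
  ∀ h, 1 ≤ h → P.l (h + 1) < P.l h →
    (Odd (P.l h - P.l (h + 1)) ∨ (Even (P.l h - P.l (h + 1)) ∧ Odd (P.l h)))

/-!
The numbers of `+` and `−` boxes depend on `m_T⁺` only through the sum of `m_T⁺(i)` over the odd
part lengths `i`. A column length `h` violates the column condition exactly when `λ_h` and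
`λ_{h+1}` have the parity of the non-fixed coordinates (odd for BDI, CII; even for CI, DIII),
where `λ_{h+1} = 0` stands for the step below the smallest part.

For BDI and CII the coordinates at even lengths are fixed, so an edge moves `c` boxes between two
consecutive odd lengths; given two distinct vertices, a transfer through a third odd length where
they differ always produces a vertex with room for such a move. For CI and DIII the coordinates at
even lengths are free up to divisibility by `c`, so two consecutive even lengths, or an even
smallest length, directly carry an edge.
-/

open Function

lemma exists_pair_ne_of_two_le_natCard {α : Type*} {Pr : α → Prop}
    (h : 2 ≤ Nat.card {a // Pr a}) : ∃ a b, Pr a ∧ Pr b ∧ a ≠ b := by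
  have : Finite {a // Pr a} := Nat.finite_of_card_ne_zero (by omega)
  have : Nontrivial {a // Pr a} := Finite.one_lt_card_iff_nontrivial.1 h
  obtain ⟨⟨a, ha⟩, ⟨b, hb⟩, hab⟩ := exists_pair_ne {a // Pr a}
  exact ⟨a, b, ha, hb, fun h => hab (Subtype.ext h)⟩

lemma Nat.add_le_of_dvd_of_lt {a b c : ℕ} (ha : c ∣ a) (hb : c ∣ b) (h : a < b) : a + c ≤ b := by
  obtain ⟨k, rfl⟩ := ha
  obtain ⟨l, rfl⟩ := hb
  have : k < l := lt_of_mul_lt_mul_left h (Nat.zero_le c)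
  calc c * k + c = c * (k + 1) := by ring
    _ ≤ c * l := Nat.mul_le_mul_left c this

namespace PartitionData

variable (P : PartitionData)

lemma l_le_l_of_le {a b : ℕ} (ha : 1 ≤ a) (hab : a ≤ b) : P.l b ≤ P.l a := by
  induction b, hab using Nat.le_induction with
  | base => exact le_rfl
  | succ b hab ih => exact (P.anti b (ha.trans hab)).trans ih

lemma mem_partsSet {x : ℕ} : x ∈ P.partsSet ↔ ∃ m, 1 ≤ m ∧ m ≤ P.len ∧ P.l m = x := by
  simp [partsSet, and_assoc]

lemma l_mem_partsSet {h : ℕ} (h1 : 1 ≤ h) (hpos : 0 < P.l h) : P.l h ∈ P.partsSet :=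
  P.mem_partsSet.2 ⟨h, h1, (P.pos h h1).1 hpos, rfl⟩

lemma pos_of_mem_partsSet {x : ℕ} (hx : x ∈ P.partsSet) : 0 < x := by
  obtain ⟨m, hm1, hm, rfl⟩ := P.mem_partsSet.1 hx
  exact (P.pos m hm1).2 hm

lemma mult_pos_iff {x : ℕ} : 0 < P.mult x ↔ x ∈ P.partsSet := by
  simp [mult, partsSet, Finset.card_pos, Finset.filter_nonempty_iff]

lemma exists_l_eq_and_l_succ_lt {a b i : ℕ} (ha : 1 ≤ a) (hab : a ≤ b) (hla : P.l a = i)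
    (hlb : P.l b < i) : ∃ h, a ≤ h ∧ h < b ∧ P.l h = i ∧ P.l (h + 1) < i := by
  induction b, hab using Nat.le_induction with
  | base => omega
  | succ b hab ih =>
    by_cases hb : P.l b < i
    · obtain ⟨h, hah, hhb, hlh⟩ := ih hb
      exact ⟨h, hah, by omega, hlh⟩
    · have := P.l_le_l_of_le ha hab
      exact ⟨b, hab, by omega, by omega, hlb⟩

lemma exists_l_eq_of_consec {i j : ℕ} (hij : Consec P i j) :
    ∃ h, 1 ≤ h ∧ P.l h = i ∧ P.l (h + 1) = j := by
  obtain ⟨hi, hj, hji, hbetween⟩ := hij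
  obtain ⟨a, ha1, -, rfl⟩ := P.mem_partsSet.1 hi
  obtain ⟨b, hb1, -, rfl⟩ := P.mem_partsSet.1 hj
  have hab : a ≤ b := by
    by_contra! hba
    exact absurd (P.l_le_l_of_le hb1 hba.le) (not_le.2 hji)
  obtain ⟨h, hah, hhb, hlh, hdrop⟩ := P.exists_l_eq_and_l_succ_lt ha1 hab rfl hji
  have hle : P.l b ≤ P.l (h + 1) := P.l_le_l_of_le (by omega) hhb
  refine ⟨h, by omega, hlh, le_antisymm (not_lt.1 fun hlt => ?_) hle⟩
  exact hbetween _ (P.l_mem_partsSet (by omega) ((P.pos_of_mem_partsSet hj).trans_le hle))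
    ⟨hlt, hdrop⟩

lemma exists_l_eq_of_isMinPart {j : ℕ} (hj : IsMinPart P j) :
    ∃ h, 1 ≤ h ∧ P.l h = j ∧ P.l (h + 1) = 0 := by
  obtain ⟨hj, hmin⟩ := hj
  obtain ⟨m, hm1, hm, rfl⟩ := P.mem_partsSet.1 hj
  have hlen : 1 ≤ P.len := hm1.trans hm
  refine ⟨P.len, hlen, le_antisymm (P.l_le_l_of_le hm1 hm) (hmin _ ?_), ?_⟩
  · exact P.mem_partsSet.2 ⟨_, hlen, le_rfl, rfl⟩
  · have := P.pos (P.len + 1) (by omega)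
    omega

lemma consec_or_isMinPart {h : ℕ} (h1 : 1 ≤ h) (hlt : P.l (h + 1) < P.l h) :
    Consec P (P.l h) (P.l (h + 1)) ∨ IsMinPart P (P.l h) ∧ P.l (h + 1) = 0 := by
  have hmem := P.l_mem_partsSet h1 (by omega)
  rcases Nat.eq_zero_or_pos (P.l (h + 1)) with h0 | hpos
  · refine Or.inr ⟨⟨hmem, fun x hx => ?_⟩, h0⟩
    obtain ⟨m, hm1, hm, rfl⟩ := P.mem_partsSet.1 hx
    have hh := P.pos h h1
    have hh' := P.pos (h + 1) (by omega)
    exact P.l_le_l_of_le hm1 (by omega)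
  · refine Or.inl ⟨hmem, P.l_mem_partsSet (by omega) hpos, hlt, ?_⟩
    rintro x hx ⟨hjx, hxi⟩
    obtain ⟨m, hm1, -, rfl⟩ := P.mem_partsSet.1 hx
    rcases le_or_gt m h with hmh | hmh
    · exact absurd (P.l_le_l_of_le hm1 hmh) (not_le.2 hxi)
    · exact absurd (P.l_le_l_of_le (by omega) hmh) (not_le.2 hjx)

theorem noEdgeCondBDI_iff : NoEdgeCondBDI P ↔ ∀ i j, Consec P i j → ¬ (Odd i ∧ Odd j) := by
  constructor
  · rintro hcond i j hij ⟨hi, hj⟩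
    obtain ⟨h, h1, rfl, rfl⟩ := P.exists_l_eq_of_consec hij
    rcases hcond h h1 hij.2.2.1 with hd | ⟨-, hl⟩
    · rw [Nat.odd_iff] at hd hi hj
      omega
    · exact Nat.not_even_iff_odd.2 hi hl
  · intro hcons h h1 hlt
    rcases Nat.even_or_odd (P.l h - P.l (h + 1)) with hd | hd
    · rcases Nat.even_or_odd (P.l h) with hl | hl
      · exact Or.inr ⟨hd, hl⟩
      · have hl' : Odd (P.l (h + 1)) := by
          rw [Nat.odd_iff] at hl ⊢
          rw [Nat.even_iff] at hd
          omega
        rcases P.consec_or_isMinPart h1 hlt with hcon | ⟨-, h0⟩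
        · exact absurd ⟨hl, hl'⟩ (hcons _ _ hcon)
        · simp [h0] at hl'
    · exact Or.inl hd

theorem noEdgeCondCI_iff : NoEdgeCondCI P ↔
    (∀ i j, Consec P i j → ¬ (Even i ∧ Even j)) ∧ ∀ j, IsMinPart P j → Odd j := by
  constructor
  · intro hcond
    constructor
    · rintro i j hij ⟨hi, hj⟩
      obtain ⟨h, h1, rfl, rfl⟩ := P.exists_l_eq_of_consec hij
      rcases hcond h h1 hij.2.2.1 with hd | ⟨-, hl⟩
      · rw [Nat.odd_iff] at hd
        rw [Nat.even_iff] at hi hj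
        omega
      · exact Nat.not_even_iff_odd.2 hl hi
    · intro j hj
      obtain ⟨h, h1, rfl, h0⟩ := P.exists_l_eq_of_isMinPart hj
      have hpos := P.pos_of_mem_partsSet hj.1
      rcases hcond h h1 (by omega) with hd | ⟨-, hl⟩
      · simpa [h0] using hd
      · exact hl
  · rintro ⟨hcons, hmin⟩ h h1 hlt
    rcases Nat.even_or_odd (P.l h - P.l (h + 1)) with hd | hd
    · rcases Nat.even_or_odd (P.l h) with hl | hl
      · have hl' : Even (P.l (h + 1)) := by
          rw [Nat.even_iff] at hl hd ⊢
          omega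
        rcases P.consec_or_isMinPart h1 hlt with hcon | ⟨hmp, -⟩
        · exact absurd ⟨hl, hl'⟩ (hcons _ _ hcon)
        · exact absurd (hmin _ hmp) (Nat.not_odd_iff_even.2 hl)
      · exact Or.inr ⟨hd, hl⟩
    · exact Or.inl hd

lemma odd_l_sub_of_forall_le_one (h : ∀ j, 1 ≤ j → P.l j - P.l (j + 1) ≤ 1) {j : ℕ}
    (hj : 1 ≤ j) (hlt : P.l (j + 1) < P.l j) : Odd (P.l j - P.l (j + 1)) := by
  rw [show P.l j - P.l (j + 1) = 1 by have := h j hj; omega]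
  exact odd_one

def oddPartSum (g : ℕ → ℕ) : ℕ := ∑ i ∈ P.partsSet with Odd i, g i

def plusCount (g : ℕ → ℕ) : ℕ :=
  ∑ i ∈ P.partsSet, (g i * ((i + 1) / 2) + (P.mult i - g i) * (i / 2))

def minusCount (g : ℕ → ℕ) : ℕ :=
  ∑ i ∈ P.partsSet, (g i * (i / 2) + (P.mult i - g i) * ((i + 1) / 2))

variable {P}

lemma row_plus_eq {i f m : ℕ} (h : f ≤ m) :
    f * ((i + 1) / 2) + (m - f) * (i / 2) = m * (i / 2) + if Odd i then f else 0 := by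
  obtain ⟨k, rfl | rfl⟩ := Nat.even_or_odd' i
  · have h1 : (2 * k + 1) / 2 = k := by omega
    have h2 : 2 * k / 2 = k := by omega
    simp only [h1, h2, Nat.not_odd_iff_even.2 (even_two_mul k), if_false]
    zify [h]
    ring
  · have h1 : (2 * k + 1 + 1) / 2 = k + 1 := by omega
    have h2 : (2 * k + 1) / 2 = k := by omega
    simp only [h1, h2, odd_two_mul_add_one k, if_true]
    zify [h]
    ring

lemma plusCount_eq {g : ℕ → ℕ} (hg : ∀ i, g i ≤ P.mult i) :
    P.plusCount g = ∑ i ∈ P.partsSet, P.mult i * (i / 2) + P.oddPartSum g := by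
  rw [plusCount, oddPartSum, Finset.sum_filter, ← Finset.sum_add_distrib]
  exact Finset.sum_congr rfl fun i _ => row_plus_eq (hg i)

lemma plusCount_add_minusCount {g : ℕ → ℕ} (hg : ∀ i, g i ≤ P.mult i) :
    P.plusCount g + P.minusCount g = ∑ i ∈ P.partsSet, P.mult i * i := by
  rw [plusCount, minusCount, ← Finset.sum_add_distrib]
  refine Finset.sum_congr rfl fun i _ => ?_
  have hi : (i + 1) / 2 + i / 2 = i := by omega
  have hm : g i + (P.mult i - g i) = P.mult i := Nat.add_sub_cancel' (hg i)
  calc _ = (g i + (P.mult i - g i)) * ((i + 1) / 2 + i / 2) := by ring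
    _ = P.mult i * i := by rw [hi, hm]

lemma oddPartSum_update_of_even (g : ℕ → ℕ) {x : ℕ} (hx : Even x) (a : ℕ) :
    P.oddPartSum (update g x a) = P.oddPartSum g := by
  refine Finset.sum_congr rfl fun i hi => update_of_ne ?_ _ _
  rintro rfl
  exact Nat.not_even_iff_odd.2 (Finset.mem_filter.1 hi).2 hx

lemma oddPartSum_update_add (g : ℕ → ℕ) {x : ℕ} (hx : x ∈ P.partsSet) (ho : Odd x) (a : ℕ) :
    P.oddPartSum (update g x a) + g x = P.oddPartSum g + a := by
  have hx' : x ∈ P.partsSet.filter Odd := Finset.mem_filter.2 ⟨hx, ho⟩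
  rw [oddPartSum, oddPartSum, Finset.sum_update_of_mem hx', ← Finset.add_sum_erase _ _ hx',
    Finset.sdiff_singleton_eq_erase]
  ring

end PartitionData

namespace SYD

open PartitionData

variable {P : PartitionData} {p q : ℕ}

theorem ext {T T' : SYD P p q} (h : T.f = T'.f) : T = T' := by
  cases T
  cases T'
  cases h
  rfl

lemma f_eq_zero_of_notMem (T : SYD P p q) {x : ℕ} (hx : x ∉ P.partsSet) : T.f x = 0 := by
  have := T.le_mult x
  rw [← P.mult_pos_iff] at hx
  omega

lemma oddPartSum_eq (T T' : SYD P p q) : P.oddPartSum T.f = P.oddPartSum T'.f := by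
  have h : P.plusCount T.f = p := T.plus_eq
  have h' : P.plusCount T'.f = p := T'.plus_eq
  rw [plusCount_eq T.le_mult] at h
  rw [plusCount_eq T'.le_mult] at h'
  omega

lemma exists_f_eq (T : SYD P p q) {g : ℕ → ℕ} (hg : ∀ i, g i ≤ P.mult i)
    (hodd : P.oddPartSum g = P.oddPartSum T.f) : ∃ S : SYD P p q, S.f = g := by
  have hT : P.plusCount T.f = p := T.plus_eq
  have hT' : P.minusCount T.f = q := T.minus_eq
  have hplus : P.plusCount g = p := by
    rw [plusCount_eq hg, hodd, ← plusCount_eq T.le_mult, hT]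
  have hminus : P.minusCount g = q := by
    have := plusCount_add_minusCount hg
    have := plusCount_add_minusCount T.le_mult
    omega
  exact ⟨⟨g, hg, hplus, hminus⟩, rfl⟩

lemma exists_update_of_even (T : SYD P p q) {x a : ℕ} (hx : Even x) (ha : a ≤ P.mult x) :
    ∃ S : SYD P p q, S.f = update T.f x a := by
  refine T.exists_f_eq (fun y => ?_) (P.oddPartSum_update_of_even _ hx _)
  rcases eq_or_ne y x with rfl | hy
  · simpa using ha
  · simpa [hy] using T.le_mult y

lemma exists_transfer (T : SYD P p q) {a b d : ℕ} (ha : a ∈ P.partsSet) (hb : b ∈ P.partsSet)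
    (hoa : Odd a) (hob : Odd b) (hab : a ≠ b) (hup : T.f a + d ≤ P.mult a) (hdown : d ≤ T.f b) :
    ∃ S : SYD P p q, S.f = update (update T.f a (T.f a + d)) b (T.f b - d) := by
  refine T.exists_f_eq (fun y => ?_) ?_
  · simp only [update_apply]
    have := T.le_mult y
    have := T.le_mult b
    split_ifs with h1 h2 <;> subst_vars <;> omega
  · have h1 := P.oddPartSum_update_add (update T.f a (T.f a + d)) hb hob (T.f b - d)
    have h2 := P.oddPartSum_update_add T.f ha hoa (T.f a + d)
    rw [update_of_ne hab.symm] at h1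
    omega

lemma exists_odd_lt_of_ne {A B : SYD P p q} (hA : ∀ i, Even i → 2 * A.f i = P.mult i)
    (hB : ∀ i, Even i → 2 * B.f i = P.mult i) (hne : A ≠ B) :
    ∃ w ∈ P.partsSet, Odd w ∧ A.f w < B.f w := by
  by_contra! hle
  have hodd : ∀ w ∈ P.partsSet.filter Odd, B.f w = A.f w :=
    (Finset.sum_eq_sum_iff_of_le fun w hw => hle w (Finset.mem_filter.1 hw).1
      (Finset.mem_filter.1 hw).2).1 (B.oddPartSum_eq A)
  refine hne (ext (funext fun x => ?_))
  by_cases hx : x ∈ P.partsSet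
  · rcases Nat.even_or_odd x with he | ho
    · have := hA x he
      have := hB x he
      omega
    · exact (hodd x (Finset.mem_filter.2 ⟨hx, ho⟩)).symm
  · rw [A.f_eq_zero_of_notMem hx, B.f_eq_zero_of_notMem hx]

/-- For X = BDI, CII (resp. CI, DIII below), `syd_X(λ;p,q)` is `IsEvenFixed c`
(resp. `IsOddFixed c`) cut down by a condition on `(p, q)` alone, with `c` the step of `Γ_X`. -/
def IsEvenFixed (c : ℕ) (T : SYD P p q) : Prop :=
  (∀ i, Even i → 2 * T.f i = P.mult i) ∧ ∀ i, Odd i → c ∣ P.mult i ∧ c ∣ T.f i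

def IsOddFixed (c : ℕ) (T : SYD P p q) : Prop :=
  (∀ i, Odd i → 2 * T.f i = P.mult i) ∧ ∀ i, Even i → c ∣ P.mult i ∧ c ∣ T.f i

end SYD

section OrbitGraph

open PartitionData

variable {P : PartitionData} {p q c : ℕ} {Pr : SYD P p q → Prop}

lemma orbitGraphX_eq_bot_iff : orbitGraphX P p q c Pr = ⊥ ↔
    ∀ S S' : SYD P p q, Pr S → Pr S' → S ≠ S' → ¬ AdjRel P c S S' := by
  rw [SimpleGraph.eq_bot_iff_forall_not_adj]
  constructor
  · intro h S S' hS hS' hne hadj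
    exact h ⟨S, hS⟩ ⟨S', hS'⟩ ((SimpleGraph.fromRel_adj _ _ _).2
      ⟨fun he => hne (congrArg Subtype.val he), Or.inl hadj⟩)
  · rintro h ⟨S, hS⟩ ⟨S', hS'⟩ hadj
    obtain ⟨hne, hadj | hadj⟩ := (SimpleGraph.fromRel_adj _ _ _).1 hadj
    · exact h S S' hS hS' (fun he => hne (Subtype.ext he)) hadj
    · exact h S' S hS' hS (fun he => hne (Subtype.ext he.symm)) hadj

lemma orbitGraphX_ne_bot_of_consec (hc : 0 < c) {i j : ℕ} (hcon : Consec P i j)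
    {S S' : SYD P p q} (hS : Pr S) (hS' : Pr S') (hi : S'.f i = S.f i + c)
    (hj : S.f j = S'.f j + c) (hout : ∀ x, x ≠ i → x ≠ j → S.f x = S'.f x) :
    orbitGraphX P p q c Pr ≠ ⊥ := by
  intro hbot
  exact orbitGraphX_eq_bot_iff.1 hbot S S' hS hS' (by rintro rfl; omega)
    (Or.inl ⟨i, j, hcon, hout, Or.inr ⟨hi, hj⟩⟩)

lemma orbitGraphX_ne_bot_of_isMinPart (hc : 0 < c) {j : ℕ} (hmin : IsMinPart P j)
    {S S' : SYD P p q} (hS : Pr S) (hS' : Pr S') (hj : S'.f j = S.f j + c)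
    (hout : ∀ x, x ≠ j → S.f x = S'.f x) :
    orbitGraphX P p q c Pr ≠ ⊥ := by
  intro hbot
  exact orbitGraphX_eq_bot_iff.1 hbot S S' hS hS' (by rintro rfl; omega)
    (Or.inr ⟨j, hmin, hout, Or.inr hj⟩)

lemma AdjRel.exists_consec_or_isMinPart (hc : 0 < c) {T T' : SYD P p q}
    (h : AdjRel P c T T') :
    (∃ i j, Consec P i j ∧ T.f i ≠ T'.f i ∧ T.f j ≠ T'.f j) ∨
      ∃ j, IsMinPart P j ∧ (∀ x, x ≠ j → T.f x = T'.f x) ∧ T.f j ≠ T'.f j := by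
  rcases h with ⟨i, j, hcon, -, hij⟩ | ⟨j, hmin, hout, hj⟩
  · exact Or.inl ⟨i, j, hcon, by omega, by omega⟩
  · exact Or.inr ⟨j, hmin, hout, by omega⟩

theorem orbitGraphX_eq_bot_of_even_fixed (hc : 0 < c)
    (hPr : ∀ T, Pr T → ∀ i, Even i → 2 * T.f i = P.mult i) (hcond : NoEdgeCondBDI P) :
    orbitGraphX P p q c Pr = ⊥ := by
  rw [orbitGraphX_eq_bot_iff]
  intro T T' hT hT' _ hadj
  have hodd : ∀ x, T.f x ≠ T'.f x → Odd x := fun x hx => Nat.not_even_iff_odd.1 fun he => by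
    have := hPr T hT x he
    have := hPr T' hT' x he
    omega
  rcases hadj.exists_consec_or_isMinPart hc with ⟨i, j, hcon, hi, hj⟩ | ⟨j, hmin, hout, hj⟩
  · exact P.noEdgeCondBDI_iff.1 hcond i j hcon ⟨hodd i hi, hodd j hj⟩
  · -- a move at the single odd part `j` would change the number of `+` boxes
    have h := P.oddPartSum_update_add T.f hmin.1 (hodd j hj) (T'.f j)
    rw [← eq_update_iff.2 ⟨rfl, fun x hx => (hout x hx).symm⟩, T'.oddPartSum_eq T] at h
    omega

theorem orbitGraphX_eq_bot_of_odd_fixed (hc : 0 < c)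
    (hPr : ∀ T, Pr T → ∀ i, Odd i → 2 * T.f i = P.mult i) (hcond : NoEdgeCondCI P) :
    orbitGraphX P p q c Pr = ⊥ := by
  rw [orbitGraphX_eq_bot_iff]
  intro T T' hT hT' _ hadj
  have heven : ∀ x, T.f x ≠ T'.f x → Even x := fun x hx => Nat.not_odd_iff_even.1 fun ho => by
    have := hPr T hT x ho
    have := hPr T' hT' x ho
    omega
  obtain ⟨hcons, hmins⟩ := P.noEdgeCondCI_iff.1 hcond
  rcases hadj.exists_consec_or_isMinPart hc with ⟨i, j, hcon, hi, hj⟩ | ⟨j, hmin, -, hj⟩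
  · exact hcons i j hcon ⟨heven i hi, heven j hj⟩
  · exact Nat.not_even_iff_odd.2 (hmins j hmin) (heven j hj)

end OrbitGraph

section EdgeCriterion

open PartitionData

variable {P : PartitionData} {p q c : ℕ} {R : Prop} {Pr : SYD P p q → Prop}

lemma exists_transfer_of_isEvenFixed (hPr : ∀ T, Pr T ↔ R ∧ T.IsEvenFixed c) {T : SYD P p q}
    (hT : Pr T) {a b : ℕ} (ha : a ∈ P.partsSet) (hb : b ∈ P.partsSet) (hoa : Odd a) (hob : Odd b)
    (hab : a ≠ b) (hup : T.f a + c ≤ P.mult a) (hdown : c ≤ T.f b) :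
    ∃ S, Pr S ∧ S.f a = T.f a + c ∧ S.f b = T.f b - c ∧
      ∀ x, x ≠ a → x ≠ b → S.f x = T.f x := by
  obtain ⟨S, hS⟩ := T.exists_transfer ha hb hoa hob hab hup hdown
  have hSa : S.f a = T.f a + c := by simp [hS, hab]
  have hSb : S.f b = T.f b - c := by simp [hS]
  have hSx : ∀ x, x ≠ a → x ≠ b → S.f x = T.f x := fun x h1 h2 => by simp [hS, h1, h2]
  obtain ⟨hR, hfix, hdvd⟩ := (hPr T).1 hT
  refine ⟨S, (hPr S).2 ⟨hR, fun x hx => ?_, fun x hx => ⟨(hdvd x hx).1, ?_⟩⟩, hSa, hSb, hSx⟩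
  · have hxa : x ≠ a := by rintro rfl; exact Nat.not_even_iff_odd.2 hoa hx
    have hxb : x ≠ b := by rintro rfl; exact Nat.not_even_iff_odd.2 hob hx
    rw [hSx x hxa hxb]
    exact hfix x hx
  · rcases eq_or_ne x a with rfl | hxa
    · exact hSa ▸ dvd_add (hdvd x hx).2 dvd_rfl
    rcases eq_or_ne x b with rfl | hxb
    · exact hSb ▸ Nat.dvd_sub (hdvd x hx).2 dvd_rfl
    exact hSx x hxa hxb ▸ (hdvd x hx).2

lemma orbitGraphX_ne_bot_of_room (hc : 0 < c) (hPr : ∀ T, Pr T ↔ R ∧ T.IsEvenFixed c)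
    {i j : ℕ} (hcon : Consec P i j) (hoi : Odd i) (hoj : Odd j) {S : SYD P p q} (hS : Pr S)
    (hup : S.f i + c ≤ P.mult i) (hdown : c ≤ S.f j) : orbitGraphX P p q c Pr ≠ ⊥ := by
  obtain ⟨S', hS', hi, hj, hout⟩ := exists_transfer_of_isEvenFixed hPr hS hcon.1 hcon.2.1 hoi hoj
    hcon.2.2.1.ne' hup hdown
  exact orbitGraphX_ne_bot_of_consec hc hcon hS hS' hi (by omega)
    fun x h1 h2 => (hout x h1 h2).symm

/-- Some vertex has room to move `c` from `j` to `i`: either `A` itself, or `A` after one transfer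
between `i`, `j` and a third odd part where `A` and `B` differ. -/
theorem orbitGraphX_ne_bot_of_consec_odd (hc : 0 < c) (hPr : ∀ T, Pr T ↔ R ∧ T.IsEvenFixed c)
    {A B : SYD P p q} (hA : Pr A) (hB : Pr B) (hAB : A ≠ B) {i j : ℕ} (hcon : Consec P i j)
    (hoi : Odd i) (hoj : Odd j) : orbitGraphX P p q c Pr ≠ ⊥ := by
  obtain ⟨-, hfixA, hdvdA⟩ := (hPr A).1 hA
  obtain ⟨-, hfixB, hdvdB⟩ := (hPr B).1 hB
  have hij : i ≠ j := hcon.2.2.1.ne'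
  have hci : c ≤ P.mult i := Nat.le_of_dvd (P.mult_pos_iff.2 hcon.1) (hdvdA i hoi).1
  have hcj : c ≤ P.mult j := Nat.le_of_dvd (P.mult_pos_iff.2 hcon.2.1) (hdvdA j hoj).1
  have hup : ∀ x, Odd x → A.f x < P.mult x → A.f x + c ≤ P.mult x := fun x hx =>
    Nat.add_le_of_dvd_of_lt (hdvdA x hx).2 (hdvdA x hx).1
  have hdown : ∀ x, Odd x → 0 < A.f x → c ≤ A.f x := fun x hx h => Nat.le_of_dvd h (hdvdA x hx).2
  have hAi := A.le_mult i
  have hAj := A.le_mult j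
  by_cases h1 : A.f i < P.mult i ∧ 0 < A.f j
  · exact orbitGraphX_ne_bot_of_room hc hPr hcon hoi hoj hA (hup i hoi h1.1) (hdown j hoj h1.2)
  by_cases h2 : 0 < A.f i ∧ A.f j < P.mult j
  · obtain ⟨S, hS, hSj, hSi, -⟩ := exists_transfer_of_isEvenFixed hPr hA hcon.2.1 hcon.1 hoj hoi
      hij.symm (hup j hoj h2.2) (hdown i hoi h2.1)
    exact orbitGraphX_ne_bot_of_room hc hPr hcon hoi hoj hS (by omega) (by omega)
  rcases (by omega : A.f i = P.mult i ∧ A.f j = P.mult j ∨ A.f i = 0 ∧ A.f j = 0) with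
    ⟨hi, hj⟩ | ⟨hi, hj⟩
  · obtain ⟨w, hw, hwo, hlt⟩ := SYD.exists_odd_lt_of_ne hfixA hfixB hAB
    have hBw := B.le_mult w
    have hwj : j ≠ w := by rintro rfl; omega
    obtain ⟨S, hS, -, hSi, hSx⟩ := exists_transfer_of_isEvenFixed hPr hA hw hcon.1 hwo hoi
      (by rintro rfl; omega) (hup w hwo (by omega)) (by omega)
    exact orbitGraphX_ne_bot_of_room hc hPr hcon hoi hoj hS (by omega)
      (by rw [hSx j hwj hij.symm]; omega)
  · obtain ⟨v, hv, hvo, hlt⟩ := SYD.exists_odd_lt_of_ne hfixB hfixA hAB.symm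
    have hiv : i ≠ v := by rintro rfl; omega
    obtain ⟨S, hS, hSj, -, hSx⟩ := exists_transfer_of_isEvenFixed hPr hA hcon.2.1 hv hoj hvo
      (by rintro rfl; omega) (by omega) (hdown v hvo (by omega))
    exact orbitGraphX_ne_bot_of_room hc hPr hcon hoi hoj hS (by rw [hSx i hij hiv]; omega)
      (by omega)

lemma exists_update_of_isOddFixed (hPr : ∀ T, Pr T ↔ R ∧ T.IsOddFixed c) {T : SYD P p q}
    (hT : Pr T) {x a : ℕ} (hx : Even x) (ha : a ≤ P.mult x) (hca : c ∣ a) :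
    ∃ S, Pr S ∧ S.f x = a ∧ ∀ y, y ≠ x → S.f y = T.f y := by
  obtain ⟨S, hS⟩ := T.exists_update_of_even hx ha
  have hSx : S.f x = a := by simp [hS]
  have hSy : ∀ y, y ≠ x → S.f y = T.f y := fun y hy => by simp [hS, hy]
  obtain ⟨hR, hfix, hdvd⟩ := (hPr T).1 hT
  refine ⟨S, (hPr S).2 ⟨hR, fun y hy => ?_, fun y hy => ⟨(hdvd y hy).1, ?_⟩⟩, hSx, hSy⟩
  · have hyx : y ≠ x := by rintro rfl; exact Nat.not_even_iff_odd.2 hy hx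
    exact hSy y hyx ▸ hfix y hy
  · rcases eq_or_ne y x with rfl | hyx
    · exact hSx ▸ hca
    · exact hSy y hyx ▸ (hdvd y hy).2

theorem orbitGraphX_ne_bot_of_isOddFixed (hc : 0 < c) (hPr : ∀ T, Pr T ↔ R ∧ T.IsOddFixed c)
    {T : SYD P p q} (hT : Pr T) (hcond : ¬ NoEdgeCondCI P) : orbitGraphX P p q c Pr ≠ ⊥ := by
  obtain ⟨-, -, hdvd⟩ := (hPr T).1 hT
  have hcm : ∀ x ∈ P.partsSet, Even x → c ≤ P.mult x := fun x hx he =>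
    Nat.le_of_dvd (P.mult_pos_iff.2 hx) (hdvd x he).1
  rw [P.noEdgeCondCI_iff, not_and_or] at hcond
  simp only [not_forall, not_not, Nat.not_odd_iff_even] at hcond
  rcases hcond with ⟨i, j, hcon, hei, hej⟩ | ⟨j, hmin, hej⟩
  · have hij : i ≠ j := hcon.2.2.1.ne'
    obtain ⟨S₁, hS₁, hS₁i, hS₁x⟩ :=
      exists_update_of_isOddFixed hPr hT hei (Nat.zero_le _) (dvd_zero c)
    obtain ⟨S, hS, hSj, hSx⟩ := exists_update_of_isOddFixed hPr hS₁ hej (hcm j hcon.2.1 hej) dvd_rfl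
    obtain ⟨S₁', hS₁', hS₁i', hS₁x'⟩ :=
      exists_update_of_isOddFixed hPr hT hei (hcm i hcon.1 hei) dvd_rfl
    obtain ⟨S', hS', hSj', hSx'⟩ :=
      exists_update_of_isOddFixed hPr hS₁' hej (Nat.zero_le _) (dvd_zero c)
    exact orbitGraphX_ne_bot_of_consec hc hcon hS hS'
      (by rw [hSx i hij, hSx' i hij, hS₁i, hS₁i']; omega) (by omega)
      fun x hxi hxj => by rw [hSx x hxj, hSx' x hxj, hS₁x x hxi, hS₁x' x hxi]
  · obtain ⟨S, hS, hSj, hSx⟩ := exists_update_of_isOddFixed hPr hT hej (Nat.zero_le _) (dvd_zero c)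
    obtain ⟨S', hS', hSj', hSx'⟩ :=
      exists_update_of_isOddFixed hPr hT hej (hcm j hmin.1 hej) dvd_rfl
    exact orbitGraphX_ne_bot_of_isMinPart hc hmin hS hS' (by omega)
      fun x hx => by rw [hSx x hx, hSx' x hx]

theorem orbitGraphX_eq_bot_iff_of_isEvenFixed (hc : 0 < c)
    (hPr : ∀ T, Pr T ↔ R ∧ T.IsEvenFixed c) (h2 : 2 ≤ Nat.card {T // Pr T}) :
    orbitGraphX P p q c Pr = ⊥ ↔ NoEdgeCondBDI P := by
  refine ⟨fun hbot => P.noEdgeCondBDI_iff.2 ?_,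
    orbitGraphX_eq_bot_of_even_fixed hc fun T hT => ((hPr T).1 hT).2.1⟩
  rintro i j hcon ⟨hoi, hoj⟩
  obtain ⟨A, B, hA, hB, hAB⟩ := exists_pair_ne_of_two_le_natCard h2
  exact orbitGraphX_ne_bot_of_consec_odd hc hPr hA hB hAB hcon hoi hoj hbot

theorem orbitGraphX_eq_bot_iff_of_isOddFixed (hc : 0 < c)
    (hPr : ∀ T, Pr T ↔ R ∧ T.IsOddFixed c) (h2 : 2 ≤ Nat.card {T // Pr T}) :
    orbitGraphX P p q c Pr = ⊥ ↔ NoEdgeCondCI P := by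
  refine ⟨fun hbot => by_contra fun hcond => ?_,
    orbitGraphX_eq_bot_of_odd_fixed hc fun T hT => ((hPr T).1 hT).2.1⟩
  obtain ⟨T, -, hT, -⟩ := exists_pair_ne_of_two_le_natCard h2
  exact orbitGraphX_ne_bot_of_isOddFixed hc hPr hT hcond hbot

end EdgeCriterion

theorem stmt14_general (P : PartitionData) (p q : ℕ) :
    (2 ≤ Nat.card {T : SYD P p q // T.IsBDI} →
      (orbitGraphX P p q 1 SYD.IsBDI = ⊥ ↔ NoEdgeCondBDI P)) ∧
    (2 ≤ Nat.card {T : SYD P p q // T.IsCII} →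
      (orbitGraphX P p q 2 SYD.IsCII = ⊥ ↔ NoEdgeCondBDI P)) ∧
    (2 ≤ Nat.card {T : SYD P p q // T.IsCI} →
      (orbitGraphX P p q 1 SYD.IsCI = ⊥ ↔ NoEdgeCondCI P)) ∧
    (2 ≤ Nat.card {T : SYD P p q // T.IsDIII} →
      (orbitGraphX P p q 2 SYD.IsDIII = ⊥ ↔ NoEdgeCondCI P)) ∧
    ((∀ j, 1 ≤ j → P.l j - P.l (j + 1) ≤ 1) →
      orbitGraphX P p q 1 SYD.IsBDI = ⊥ ∧ orbitGraphX P p q 2 SYD.IsCII = ⊥ ∧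
        orbitGraphX P p q 1 SYD.IsCI = ⊥ ∧ orbitGraphX P p q 2 SYD.IsDIII = ⊥) := by
  have hBDI : ∀ T : SYD P p q, T.IsBDI ↔ True ∧ T.IsEvenFixed 1 := fun T => by
    simp [SYD.IsBDI, SYD.IsEvenFixed]
  have hCII : ∀ T : SYD P p q, T.IsCII ↔ (Even p ∧ Even q) ∧ T.IsEvenFixed 2 := fun T => by
    simp only [SYD.IsCII, SYD.IsEvenFixed, even_iff_two_dvd, and_assoc]
  have hCI : ∀ T : SYD P p q, T.IsCI ↔ p = q ∧ T.IsOddFixed 1 := fun T => by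
    simp [SYD.IsCI, SYD.IsOddFixed]
  have hDIII : ∀ T : SYD P p q, T.IsDIII ↔ p = q ∧ T.IsOddFixed 2 := fun T => by
    simp only [SYD.IsDIII, SYD.IsOddFixed, even_iff_two_dvd]
  refine ⟨orbitGraphX_eq_bot_iff_of_isEvenFixed one_pos hBDI,
    orbitGraphX_eq_bot_iff_of_isEvenFixed two_pos hCII,
    orbitGraphX_eq_bot_iff_of_isOddFixed one_pos hCI,
    orbitGraphX_eq_bot_iff_of_isOddFixed two_pos hDIII, fun hdist => ?_⟩
  have hB : NoEdgeCondBDI P := fun j hj hlt =>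
    Or.inl (P.odd_l_sub_of_forall_le_one hdist hj hlt)
  have hC : NoEdgeCondCI P := fun j hj hlt =>
    Or.inl (P.odd_l_sub_of_forall_le_one hdist hj hlt)
  exact ⟨orbitGraphX_eq_bot_of_even_fixed one_pos (fun T hT => hT) hB,
    orbitGraphX_eq_bot_of_even_fixed two_pos (fun T hT => hT.2.2.1) hB,
    orbitGraphX_eq_bot_of_odd_fixed one_pos (fun T hT => hT.2) hC,
    orbitGraphX_eq_bot_of_odd_fixed two_pos (fun T hT => hT.2.1) hC⟩

/-- Assuming `#syd_X(λ;p,q) ≥ 2`, the orbit graph `Γ_X(λ;p,q)` has no edges iff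
the column-multiplicity condition of the corresponding type holds.  In
particular, if `λ` has distinct column lengths, `Γ_X(λ;p,q)` has no edges. -/
theorem stmt14 (P : PartitionData) (p q : ℕ) (hn : P.boxSum = p + q) :
    (2 ≤ Nat.card {T : SYD P p q // T.IsBDI} →
      (orbitGraphX P p q 1 SYD.IsBDI = ⊥ ↔ NoEdgeCondBDI P)) ∧
    (2 ≤ Nat.card {T : SYD P p q // T.IsCII} →
      (orbitGraphX P p q 2 SYD.IsCII = ⊥ ↔ NoEdgeCondBDI P)) ∧
    (2 ≤ Nat.card {T : SYD P p q // T.IsCI} →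
      (orbitGraphX P p q 1 SYD.IsCI = ⊥ ↔ NoEdgeCondCI P)) ∧
    (2 ≤ Nat.card {T : SYD P p q // T.IsDIII} →
      (orbitGraphX P p q 2 SYD.IsDIII = ⊥ ↔ NoEdgeCondCI P)) ∧
    ((∀ j, 1 ≤ j → P.l j - P.l (j + 1) ≤ 1) →
      orbitGraphX P p q 1 SYD.IsBDI = ⊥ ∧ orbitGraphX P p q 2 SYD.IsCII = ⊥ ∧
        orbitGraphX P p q 1 SYD.IsCI = ⊥ ∧ orbitGraphX P p q 2 SYD.IsDIII = ⊥) :=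
  stmt14_general P p q
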